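/- arXiv:2507.17513 — 3 statements merged into one kernel-verified Lean document; each statement's English description precedes it below -/
import Mathlib

section
/- Let U : ℝ^d → ℝ be continuous and let s : ℝ × ℝ^d → ℝ be continuously differentiable and solve the deterministic Hamilton–Jacobi–Bellman equation ∂_t s(t,x) = ½‖∇_x s(t,x)‖² − U(x) for all t ∈ [0,1] and x ∈ ℝ^d. Then for all 0 ≤ t₀ ≤ t₁ ≤ 1 and every continuously differentiable path x : [t₀, t₁] → ℝ^d, ∫_{t₀}^{t₁} ( ½‖x'(t)‖² + U(x(t)) ) dt ≥ s(t₀, x(t₀)) − s(t₁, x(t₁)). -/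
open MeasureTheory

open scoped RealInnerProductSpace

/-! Along the path, `d/dt s(t, x t) = ∂ₜs + ⟪∇s, x'⟫ = ½‖∇s‖² − U + ⟪∇s, x'⟫` by the HJB equation,
and this is `≥ −(½‖x'‖² + U)` because `½‖∇s + x'‖² ≥ 0`. Integrating the bound over `[t₀, t₁]`
gives the inequality. -/

section

variable {E : Type*} [NormedAddCommGroup E] [InnerProductSpace ℝ E]

lemma deriv_fst_eq_fderiv_uncurry_apply {s : ℝ → E → ℝ} {t : ℝ} {y : E}
    (hs : DifferentiableAt ℝ (fun q : ℝ × E => s q.1 q.2) (t, y)) :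
    deriv (fun τ => s τ y) t = fderiv ℝ (fun q : ℝ × E => s q.1 q.2) (t, y) (1, 0) :=
  (hs.hasFDerivAt.comp_hasDerivAt (f := fun τ => (τ, y)) t
    ((hasDerivAt_id t).prodMk (hasDerivAt_const t y))).deriv

lemma inner_gradient_eq_fderiv_uncurry_apply [CompleteSpace E] {s : ℝ → E → ℝ} {t : ℝ} {y : E}
    (hs : DifferentiableAt ℝ (fun q : ℝ × E => s q.1 q.2) (t, y)) (v : E) :
    ⟪gradient (s t) y, v⟫ = fderiv ℝ (fun q : ℝ × E => s q.1 q.2) (t, y) (0, v) := by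
  have hslice : HasFDerivAt (s t) _ y := hs.hasFDerivAt.comp (f := fun z => (t, z)) y
    ((hasFDerivAt_const t y).prodMk (hasFDerivAt_id y))
  rw [gradient, InnerProductSpace.toDual_symm_apply, hslice.fderiv]
  rfl

lemma hasDerivAt_uncurry_comp_curve [CompleteSpace E] {s : ℝ → E → ℝ} {x : ℝ → E} {v : E} {t : ℝ}
    (hs : DifferentiableAt ℝ (fun q : ℝ × E => s q.1 q.2) (t, x t)) (hx : HasDerivAt x v t) :
    HasDerivAt (fun τ => s τ (x τ))
      (deriv (fun τ => s τ (x t)) t + ⟪gradient (s t) (x t), v⟫) t := by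
  have hsplit : ((1 : ℝ), v) = ((1 : ℝ), (0 : E)) + ((0 : ℝ), v) := by simp
  rw [deriv_fst_eq_fderiv_uncurry_apply hs, inner_gradient_eq_fderiv_uncurry_apply hs,
    ← map_add, ← hsplit]
  exact hs.hasFDerivAt.comp_hasDerivAt t ((hasDerivAt_id t).prodMk hx)

lemma neg_inner_le_half_norm_sq_add (a b : E) : -⟪a, b⟫ ≤ 1 / 2 * ‖a‖ ^ 2 + 1 / 2 * ‖b‖ ^ 2 := by
  nlinarith [norm_add_sq_real a b, sq_nonneg ‖a + b‖]

end

theorem hjb_verification_lower_bound_general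
    (d : ℕ)
    (U : EuclideanSpace ℝ (Fin d) → ℝ) (hU : Continuous U)
    (s : ℝ → EuclideanSpace ℝ (Fin d) → ℝ)
    (hs : ContDiff ℝ 1 (fun q : ℝ × EuclideanSpace ℝ (Fin d) => s q.1 q.2))
    (hHJB : ∀ t ∈ Set.Icc (0 : ℝ) 1, ∀ x : EuclideanSpace ℝ (Fin d),
      deriv (fun τ => s τ x) t = 1 / 2 * ‖gradient (s t) x‖ ^ 2 - U x)
    (t₀ t₁ : ℝ) (ht₀ : 0 ≤ t₀) (ht : t₀ ≤ t₁) (ht₁ : t₁ ≤ 1)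
    (x x' : ℝ → EuclideanSpace ℝ (Fin d))
    (hx : ∀ t ∈ Set.Icc t₀ t₁, HasDerivAt x (x' t) t)
    (hx' : ContinuousOn x' (Set.Icc t₀ t₁)) :
    (∫ t in t₀..t₁, (1 / 2 * ‖x' t‖ ^ 2 + U (x t))) ≥ s t₀ (x t₀) - s t₁ (x t₁) := by
  have hsd : Differentiable ℝ (fun q : ℝ × EuclideanSpace ℝ (Fin d) => s q.1 q.2) :=
    hs.differentiable one_ne_zero
  have hxc : ContinuousOn x (Set.Icc t₀ t₁) := fun t hmem => (hx t hmem).continuousAt.continuousWithinAt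
  have hvalue : ∀ t ∈ Set.Icc t₀ t₁, HasDerivAt (fun τ => -s τ (x τ))
      (-(deriv (fun τ => s τ (x t)) t + ⟪gradient (s t) (x t), x' t⟫)) t :=
    fun t hmem => (hasDerivAt_uncurry_comp_curve (hsd _) (hx t hmem)).neg
  have hcost : ContinuousOn (fun t => 1 / 2 * ‖x' t‖ ^ 2 + U (x t)) (Set.Icc t₀ t₁) :=
    (continuousOn_const.mul (hx'.norm.pow 2)).add (hU.comp_continuousOn hxc)
  -- The one-sided FTC only needs the running cost, not `d/dt s(t, x t)`, to be integrable.
  have hbound := intervalIntegral.sub_le_integral_of_hasDeriv_right_of_le ht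
    (fun t hmem => (hvalue t hmem).continuousAt.continuousWithinAt)
    (fun t hmem => (hvalue t (Set.Ioo_subset_Icc_self hmem)).hasDerivWithinAt)
    hcost.integrableOn_Icc (fun t hmem => ?_)
  · linarith
  · rw [hHJB t (Set.Icc_subset_Icc ht₀ ht₁ (Set.Ioo_subset_Icc_self hmem))]
    linarith [neg_inner_le_half_norm_sq_add (gradient (s t) (x t)) (x' t)]

/-- Verification lower bound: if `s` is `C¹` and solves the deterministic HJB equation
`∂_t s(t,x) = ½‖∇_x s(t,x)‖² − U(x)` on `[0,1] × ℝ^d`, then for all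
`0 ≤ t₀ ≤ t₁ ≤ 1` and every `C¹` path `x : [t₀,t₁] → ℝ^d`,
`∫_{t₀}^{t₁} (½‖x'(t)‖² + U(x(t))) dt ≥ s(t₀, x(t₀)) − s(t₁, x(t₁))`. -/
theorem hjb_verification_lower_bound
    (d : ℕ) (hd : 1 ≤ d)
    (U : EuclideanSpace ℝ (Fin d) → ℝ) (hU : Continuous U)
    (s : ℝ → EuclideanSpace ℝ (Fin d) → ℝ)
    (hs : ContDiff ℝ 1 (fun q : ℝ × EuclideanSpace ℝ (Fin d) => s q.1 q.2))
    (hHJB : ∀ t ∈ Set.Icc (0 : ℝ) 1, ∀ x : EuclideanSpace ℝ (Fin d),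
      deriv (fun τ => s τ x) t = 1 / 2 * ‖gradient (s t) x‖ ^ 2 - U x)
    (t₀ t₁ : ℝ) (ht₀ : 0 ≤ t₀) (ht : t₀ ≤ t₁) (ht₁ : t₁ ≤ 1)
    (x x' : ℝ → EuclideanSpace ℝ (Fin d))
    (hx : ∀ t ∈ Set.Icc t₀ t₁, HasDerivAt x (x' t) t)
    (hx' : ContinuousOn x' (Set.Icc t₀ t₁)) :
    (∫ t in t₀..t₁, (1 / 2 * ‖x' t‖ ^ 2 + U (x t))) ≥ s t₀ (x t₀) - s t₁ (x t₁) :=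
  hjb_verification_lower_bound_general d U hU s hs hHJB t₀ t₁ ht₀ ht ht₁ x x' hx hx'
end

section
/- Let U : ℝ^d → ℝ be continuous, g : ℝ^d → ℝ, and let s : ℝ × ℝ^d → ℝ be continuously differentiable, solve the deterministic Hamilton–Jacobi–Bellman equation ∂_t s(t,x) = ½‖∇_x s(t,x)‖² − U(x) for all t ∈ [0,1] and x ∈ ℝ^d, and satisfy the boundary condition s(1, x) = −g(x) for all x ∈ ℝ^d. Fix x₀ ∈ ℝ^d and assume there exists a continuously differentiable path x* : [0,1] → ℝ^d with x*(0) = x₀ solving x*'(t) = −∇_x s(t, x*(t)) on [0,1]. Then the deterministic c-conjugate of g at x₀, defined as g^c(x₀) := inf over all continuously differentiable paths x : [0,1] → ℝ^d with x(0) = x₀ of [ ∫₀¹ ( ½‖x'(t)‖² + U(x(t)) ) dt − g(x(1)) ], equals s(0, x₀), and the infimum is attained by x*. -/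
/-!
Verification argument. Along any admissible path `x`, the chain rule and the HJB equation give
`d/dt s(t, x t) = ½‖∇s‖² − U(x t) + ⟪∇s, x'⟫`, so, completing the square, the running cost equals
`½‖x' + ∇s‖² − d/dt s(t, x t)`. Integrating over `[0,1]` and using `s 1 = −g`, the cost of `x`
is `s 0 x₀` plus a nonnegative integral, which vanishes along the feedback path `x' = −∇s`.
-/

open InnerProductSpace Set Function

section

variable {E : Type*} [NormedAddCommGroup E] [InnerProductSpace ℝ E] {s : ℝ → E → ℝ}

theorem hasFDerivAt_of_hasFDerivAt_uncurry {L : ℝ × E →L[ℝ] ℝ} {t : ℝ} {y : E}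
    (hs : HasFDerivAt (uncurry s) L (t, y)) :
    HasFDerivAt (s t) (L.comp (ContinuousLinearMap.inr ℝ ℝ E)) y :=
  hs.comp y (hasFDerivAt_prodMk_right t y)

theorem hasDerivAt_of_hasFDerivAt_uncurry {L : ℝ × E →L[ℝ] ℝ} {t : ℝ} {y : E}
    (hs : HasFDerivAt (uncurry s) L (t, y)) :
    HasDerivAt (fun τ => s τ y) (L (1, 0)) t := by
  exact hs.comp_hasDerivAt t ((hasDerivAt_id t).prodMk (hasDerivAt_const t y))

variable [CompleteSpace E]

theorem gradient_eq_of_hasFDerivAt_uncurry {L : ℝ × E →L[ℝ] ℝ} {t : ℝ} {y : E}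
    (hs : HasFDerivAt (uncurry s) L (t, y)) :
    gradient (s t) y = (toDual ℝ E).symm (L.comp (ContinuousLinearMap.inr ℝ ℝ E)) := by
  rw [gradient, (hasFDerivAt_of_hasFDerivAt_uncurry hs).fderiv]

theorem continuous_gradient_of_contDiff_uncurry (hs : ContDiff ℝ 1 (uncurry s)) :
    Continuous fun q : ℝ × E => gradient (s q.1) q.2 := by
  have hd := hs.differentiable one_ne_zero
  simp_rw [fun q : ℝ × E => gradient_eq_of_hasFDerivAt_uncurry (hd q).hasFDerivAt]
  exact (toDual ℝ E).symm.continuous.comp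
    ((hs.continuous_fderiv one_ne_zero).clm_comp continuous_const)

theorem hasDerivAt_uncurry_comp {x : ℝ → E} {x' : E} {t : ℝ}
    (hs : DifferentiableAt ℝ (uncurry s) (t, x t)) (hx : HasDerivAt x x' t) :
    HasDerivAt (fun τ => s τ (x τ))
      (deriv (fun τ => s τ (x t)) t + inner ℝ (gradient (s t) (x t)) x') t := by
  have hL := hs.hasFDerivAt
  have hsplit : fderiv ℝ (uncurry s) (t, x t) (1, x')
      = deriv (fun τ => s τ (x t)) t + inner ℝ (gradient (s t) (x t)) x' := by
    rw [(hasDerivAt_of_hasFDerivAt_uncurry hL).deriv, gradient_eq_of_hasFDerivAt_uncurry hL,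
      toDual_symm_apply, ContinuousLinearMap.comp_apply, ContinuousLinearMap.inr_apply, ← map_add,
      Prod.mk_add_mk, add_zero, zero_add]
  rw [← hsplit]
  exact hL.comp_hasDerivAt t ((hasDerivAt_id t).prodMk hx)

variable {U : E → ℝ} {x x' : ℝ → E} {a b : ℝ}

theorem integral_lagrangian_eq_of_hjb (hU : Continuous U) (hs : ContDiff ℝ 1 (uncurry s))
    (hab : a ≤ b)
    (hHJB : ∀ t ∈ Icc a b, ∀ y, deriv (fun τ => s τ y) t = 1 / 2 * ‖gradient (s t) y‖ ^ 2 - U y)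
    (hx : ∀ t ∈ Icc a b, HasDerivAt x (x' t) t) (hx' : ContinuousOn x' (Icc a b)) :
    ∫ t in a..b, (1 / 2 * ‖x' t‖ ^ 2 + U (x t))
      = (∫ t in a..b, 1 / 2 * ‖x' t + gradient (s t) (x t)‖ ^ 2) + s a (x a) - s b (x b) := by
  have hxc : ContinuousOn x (Icc a b) := fun t ht => (hx t ht).continuousAt.continuousWithinAt
  have hG : ContinuousOn (fun t => gradient (s t) (x t)) (Icc a b) :=
    (continuous_gradient_of_contDiff_uncurry hs).comp_continuousOn (continuousOn_id.prodMk hxc)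
  set φ' : ℝ → ℝ := fun t =>
    1 / 2 * ‖gradient (s t) (x t)‖ ^ 2 - U (x t) + inner ℝ (gradient (s t) (x t)) (x' t)
  have hφ : ∀ t ∈ Icc a b, HasDerivAt (fun τ => s τ (x τ)) (φ' t) t := fun t ht => by
    simpa only [hHJB t ht] using
      hasDerivAt_uncurry_comp (hs.differentiable one_ne_zero _) (hx t ht)
  have hφ'c : ContinuousOn φ' (Icc a b) :=
    ((hG.norm.pow 2).const_smul (1 / 2 : ℝ) |>.sub (hU.comp_continuousOn hxc)).add (hG.inner hx')
  have hFTC : ∫ t in a..b, φ' t = s b (x b) - s a (x a) :=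
    intervalIntegral.integral_eq_sub_of_hasDerivAt (by rwa [uIcc_of_le hab])
      (hφ'c.intervalIntegrable_of_Icc hab)
  have hsq : ∀ t, 1 / 2 * ‖x' t‖ ^ 2 + U (x t)
      = 1 / 2 * ‖x' t + gradient (s t) (x t)‖ ^ 2 - φ' t := fun t => by
    rw [norm_add_sq_real, real_inner_comm]
    ring
  have hψc : ContinuousOn (fun t => 1 / 2 * ‖x' t + gradient (s t) (x t)‖ ^ 2) (Icc a b) :=
    ((hx'.add hG).norm.pow 2).const_smul (1 / 2 : ℝ)
  simp_rw [hsq]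
  rw [intervalIntegral.integral_sub (hψc.intervalIntegrable_of_Icc hab)
    (hφ'c.intervalIntegrable_of_Icc hab), hFTC]
  ring

end

theorem c_conjugate_eq_value_function_general
    (d : ℕ)
    (U : EuclideanSpace ℝ (Fin d) → ℝ) (hU : Continuous U)
    (g : EuclideanSpace ℝ (Fin d) → ℝ)
    (s : ℝ → EuclideanSpace ℝ (Fin d) → ℝ)
    (hs : ContDiff ℝ 1 (fun q : ℝ × EuclideanSpace ℝ (Fin d) => s q.1 q.2))
    (hHJB : ∀ t ∈ Set.Icc (0 : ℝ) 1, ∀ x : EuclideanSpace ℝ (Fin d),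
      deriv (fun τ => s τ x) t = 1 / 2 * ‖gradient (s t) x‖ ^ 2 - U x)
    (hbd : ∀ x : EuclideanSpace ℝ (Fin d), s 1 x = -g x)
    (x₀ : EuclideanSpace ℝ (Fin d))
    (xstar : ℝ → EuclideanSpace ℝ (Fin d))
    (hxstar₀ : xstar 0 = x₀)
    (hxstar : ∀ t ∈ Set.Icc (0 : ℝ) 1,
      HasDerivAt xstar (-gradient (s t) (xstar t)) t) :
    ((∫ t in (0 : ℝ)..1, (1 / 2 * ‖gradient (s t) (xstar t)‖ ^ 2 + U (xstar t)))
        - g (xstar 1) = s 0 x₀) ∧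
    IsLeast
      {r : ℝ | ∃ x x' : ℝ → EuclideanSpace ℝ (Fin d),
        x 0 = x₀ ∧
        (∀ t ∈ Set.Icc (0 : ℝ) 1, HasDerivAt x (x' t) t) ∧
        ContinuousOn x' (Set.Icc (0 : ℝ) 1) ∧
        r = (∫ t in (0 : ℝ)..1, (1 / 2 * ‖x' t‖ ^ 2 + U (x t))) - g (x 1)}
      (s 0 x₀) := by
  have hv : ContinuousOn (fun t => -gradient (s t) (xstar t)) (Icc 0 1) :=
    ((continuous_gradient_of_contDiff_uncurry hs).comp_continuousOn
      (continuousOn_id.prodMk fun t ht => (hxstar t ht).continuousAt.continuousWithinAt)).neg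
  have hopt : ∫ t in (0 : ℝ)..1, (1 / 2 * ‖gradient (s t) (xstar t)‖ ^ 2 + U (xstar t))
      = s 0 x₀ - s 1 (xstar 1) := by
    simpa [hxstar₀] using integral_lagrangian_eq_of_hjb hU hs zero_le_one hHJB hxstar hv
  refine ⟨?_, ⟨xstar, _, hxstar₀, hxstar, hv, ?_⟩, ?_⟩
  · rw [hopt, hbd]
    ring
  · simp only [norm_neg, hopt, hbd]
    ring
  · rintro r ⟨x, x', rfl, hx, hx', rfl⟩
    have hsq : 0 ≤ ∫ t in (0 : ℝ)..1, 1 / 2 * ‖x' t + gradient (s t) (x t)‖ ^ 2 :=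
      intervalIntegral.integral_nonneg zero_le_one fun t _ => by positivity
    rw [integral_lagrangian_eq_of_hjb hU hs zero_le_one hHJB hx hx', hbd]
    linarith

/-- The deterministic `c`-conjugate potential equals the HJB value function at time `0`:
if `s` is `C¹`, solves the deterministic HJB equation on `[0,1] × ℝ^d`, satisfies the
boundary condition `s(1,x) = −g(x)`, and a gradient-flow path `x*` starting at `x₀`
exists on `[0,1]`, then
`g^c(x₀) = inf over C¹ paths x with x(0)=x₀ of [∫₀¹(½‖x'‖² + U(x)) dt − g(x(1))]`
equals `s(0, x₀)`, and the infimum is attained by `x*`. -/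
theorem c_conjugate_eq_value_function
    (d : ℕ) (hd : 1 ≤ d)
    (U : EuclideanSpace ℝ (Fin d) → ℝ) (hU : Continuous U)
    (g : EuclideanSpace ℝ (Fin d) → ℝ)
    (s : ℝ → EuclideanSpace ℝ (Fin d) → ℝ)
    (hs : ContDiff ℝ 1 (fun q : ℝ × EuclideanSpace ℝ (Fin d) => s q.1 q.2))
    (hHJB : ∀ t ∈ Set.Icc (0 : ℝ) 1, ∀ x : EuclideanSpace ℝ (Fin d),
      deriv (fun τ => s τ x) t = 1 / 2 * ‖gradient (s t) x‖ ^ 2 - U x)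
    (hbd : ∀ x : EuclideanSpace ℝ (Fin d), s 1 x = -g x)
    (x₀ : EuclideanSpace ℝ (Fin d))
    (xstar : ℝ → EuclideanSpace ℝ (Fin d))
    (hxstar₀ : xstar 0 = x₀)
    (hxstar : ∀ t ∈ Set.Icc (0 : ℝ) 1,
      HasDerivAt xstar (-gradient (s t) (xstar t)) t) :
    ((∫ t in (0 : ℝ)..1, (1 / 2 * ‖gradient (s t) (xstar t)‖ ^ 2 + U (xstar t)))
        - g (xstar 1) = s 0 x₀) ∧
    IsLeast
      {r : ℝ | ∃ x x' : ℝ → EuclideanSpace ℝ (Fin d),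
        x 0 = x₀ ∧
        (∀ t ∈ Set.Icc (0 : ℝ) 1, HasDerivAt x (x' t) t) ∧
        ContinuousOn x' (Set.Icc (0 : ℝ) 1) ∧
        r = (∫ t in (0 : ℝ)..1, (1 / 2 * ‖x' t‖ ^ 2 + U (x t))) - g (x 1)}
      (s 0 x₀) :=
  c_conjugate_eq_value_function_general d U hU g s hs hHJB hbd x₀ xstar hxstar₀ hxstar
end

section
/- Let α and β be Borel probability measures on ℝ^d, U : ℝ^d → ℝ continuous, and s : ℝ × ℝ^d → ℝ continuously differentiable solving the deterministic Hamilton–Jacobi–Bellman equation ∂_t s(t,x) = ½‖∇_x s(t,x)‖² − U(x) for all t ∈ [0,1] and x ∈ ℝ^d. Let Φ : ℝ × ℝ^d → ℝ^d be measurable with t ↦ Φ(t, ω) continuously differentiable on [0,1] for each ω, Φ(0, ω) = ω for all ω, and the pushforward of α under ω ↦ Φ(1, ω) equal to β. Assume ω ↦ ∫₀¹ ( ½‖∂_t Φ(t, ω)‖² + U(Φ(t, ω)) ) dt, ω ↦ s(0, ω), and y ↦ s(1, y) are integrable with respect to α, α, and β respectively. Then the total transport cost satisfies ∫_{ℝ^d}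 [ ∫₀¹ ( ½‖∂_t Φ(t, ω)‖² + U(Φ(t, ω)) ) dt ] dα(ω) ≥ ∫_{ℝ^d} s(0, ω) dα(ω) − ∫_{ℝ^d} s(1, y) dβ(y). -/
/-!
Along any C¹ path `γ`, the chain rule and the HJB equation give
`d/dt s(t, γ t) = ½‖∇s‖² - U(γ t) + ⟪∇s, γ'⟫ ≥ -(½‖γ'‖² + U(γ t))`,
since `½‖∇s‖² + ⟪∇s, γ'⟫ + ½‖γ'‖² = ½‖∇s + γ'‖² ≥ 0`. Integrating over `[0,1]` bounds
`s(0, ω) - s(1, Φ(1, ω))` by the cost of the path `t ↦ Φ(t, ω)`; integrating over `α` and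
pushing `α` forward to `β` gives the claim.
-/

open MeasureTheory Set
open scoped InnerProductSpace

section

variable {E : Type*} [NormedAddCommGroup E] [InnerProductSpace ℝ E]

theorem neg_real_inner_le_half_norm_sq_add_half_norm_sq (x y : E) :
    -⟪x, y⟫_ℝ ≤ 1 / 2 * ‖x‖ ^ 2 + 1 / 2 * ‖y‖ ^ 2 := by
  nlinarith [norm_add_sq_real x y, sq_nonneg ‖x + y‖]

variable [CompleteSpace E]

theorem hasDerivAt_comp_curve {s : ℝ → E → ℝ} {γ : ℝ → E} {v : E} {t : ℝ}
    (hs : DifferentiableAt ℝ (fun q : ℝ × E => s q.1 q.2) (t, γ t)) (hγ : HasDerivAt γ v t) :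
    HasDerivAt (fun τ => s τ (γ τ)) (deriv (fun τ => s τ (γ t)) t + ⟪gradient (s t) (γ t), v⟫_ℝ)
      t := by
  set D := fderiv ℝ (fun q : ℝ × E => s q.1 q.2) (t, γ t)
  have hD : HasFDerivAt (fun q : ℝ × E => s q.1 q.2) D (t, γ t) := hs.hasFDerivAt
  have htime : HasDerivAt (fun τ => s τ (γ t)) (D (1, 0)) t :=
    hD.comp_hasDerivAt (f := fun τ => (τ, γ t)) t
      ((hasDerivAt_id' t).prodMk (hasDerivAt_const t _))
  have hspace : HasFDerivAt (s t) (D.comp (ContinuousLinearMap.inr ℝ ℝ E)) (γ t) :=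
    hD.comp (γ t) (hasFDerivAt_prodMk_right t (γ t))
  have hsplit : D (1, v) = D (1, 0) + D (0, v) := by
    rw [← map_add, Prod.mk_add_mk, add_zero, zero_add]
  rw [htime.deriv, inner_gradient_left, hspace.fderiv, ContinuousLinearMap.comp_apply,
    ContinuousLinearMap.inr_apply, ← hsplit]
  exact hD.comp_hasDerivAt (f := fun τ => (τ, γ τ)) t ((hasDerivAt_id' t).prodMk hγ)

theorem sub_le_integral_lagrangian_of_hjb {U : E → ℝ} (hU : Continuous U) {s : ℝ → E → ℝ}
    (hs : Differentiable ℝ (fun q : ℝ × E => s q.1 q.2)) {a b : ℝ} (hab : a ≤ b)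
    (hHJB : ∀ t ∈ Icc a b, ∀ x : E,
      deriv (fun τ => s τ x) t = 1 / 2 * ‖gradient (s t) x‖ ^ 2 - U x)
    {γ γ' : ℝ → E} (hγ : ∀ t ∈ Icc a b, HasDerivAt γ (γ' t) t) (hγ' : ContinuousOn γ' (Icc a b)) :
    s a (γ a) - s b (γ b) ≤ ∫ t in a..b, (1 / 2 * ‖γ' t‖ ^ 2 + U (γ t)) := by
  have hγc : ContinuousOn γ (Icc a b) := fun t ht => (hγ t ht).continuousAt.continuousWithinAt
  have hL : ContinuousOn (fun t => 1 / 2 * ‖γ' t‖ ^ 2 + U (γ t)) (Icc a b) := by fun_prop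
  have hderiv (t : ℝ) (ht : t ∈ Icc a b) := hasDerivAt_comp_curve (hs _) (hγ t ht)
  have hftc := intervalIntegral.sub_le_integral_of_hasDeriv_right_of_le hab
    (g := fun τ => -s τ (γ τ)) (φ := fun t => 1 / 2 * ‖γ' t‖ ^ 2 + U (γ t))
    (fun t ht => (hderiv t ht).continuousAt.continuousWithinAt.neg)
    (fun t ht => (hderiv t (Ioo_subset_Icc_self ht)).neg.hasDerivWithinAt)
    (hL.integrableOn_compact isCompact_Icc)
    (fun t ht => by
      rw [hHJB t (Ioo_subset_Icc_self ht)]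
      linarith [neg_real_inner_le_half_norm_sq_add_half_norm_sq (gradient (s t) (γ t)) (γ' t)])
  linarith

end

theorem integral_sub_integral_map_le {X Y : Type*} [MeasurableSpace X] [MeasurableSpace Y]
    {μ : Measure X} {T : X → Y} (hT : AEMeasurable T μ) {f c : X → ℝ} {g : Y → ℝ}
    (hf : Integrable f μ) (hg : Integrable g (μ.map T)) (hc : Integrable c μ)
    (h : ∀ᵐ x ∂μ, f x - g (T x) ≤ c x) :
    ∫ x, f x ∂μ - ∫ y, g y ∂μ.map T ≤ ∫ x, c x ∂μ := by
  have hgT : Integrable (fun x => g (T x)) μ :=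
    (integrable_map_measure hg.aestronglyMeasurable hT).mp hg
  rw [integral_map hT hg.aestronglyMeasurable, ← integral_sub hf hgT]
  exact integral_mono_ae (hf.sub hgT) hc h

theorem gsb_weak_duality_general
    (d : ℕ)
    (α β : Measure (EuclideanSpace ℝ (Fin d)))
    (U : EuclideanSpace ℝ (Fin d) → ℝ) (hU : Continuous U)
    (s : ℝ → EuclideanSpace ℝ (Fin d) → ℝ)
    (hs : ContDiff ℝ 1 (fun q : ℝ × EuclideanSpace ℝ (Fin d) => s q.1 q.2))
    (hHJB : ∀ t ∈ Set.Icc (0 : ℝ) 1, ∀ x : EuclideanSpace ℝ (Fin d),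
      deriv (fun τ => s τ x) t = 1 / 2 * ‖gradient (s t) x‖ ^ 2 - U x)
    (Φ Φ' : ℝ → EuclideanSpace ℝ (Fin d) → EuclideanSpace ℝ (Fin d))
    (hΦmeas : Measurable (fun q : ℝ × EuclideanSpace ℝ (Fin d) => Φ q.1 q.2))
    (hΦderiv : ∀ ω : EuclideanSpace ℝ (Fin d), ∀ t ∈ Set.Icc (0 : ℝ) 1,
      HasDerivAt (fun τ => Φ τ ω) (Φ' t ω) t)
    (hΦ'cont : ∀ ω : EuclideanSpace ℝ (Fin d),
      ContinuousOn (fun t => Φ' t ω) (Set.Icc (0 : ℝ) 1))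
    (hΦ₀ : ∀ ω : EuclideanSpace ℝ (Fin d), Φ 0 ω = ω)
    (hpush : Measure.map (fun ω => Φ 1 ω) α = β)
    (hcost_int : Integrable
      (fun ω => ∫ t in (0 : ℝ)..1, (1 / 2 * ‖Φ' t ω‖ ^ 2 + U (Φ t ω))) α)
    (hs0_int : Integrable (fun ω => s 0 ω) α)
    (hs1_int : Integrable (fun y => s 1 y) β) :
    (∫ ω, (∫ t in (0 : ℝ)..1, (1 / 2 * ‖Φ' t ω‖ ^ 2 + U (Φ t ω))) ∂α) ≥
      (∫ ω, s 0 ω ∂α) - ∫ y, s 1 y ∂β := by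
  have hpath (ω : EuclideanSpace ℝ (Fin d)) :
      s 0 ω - s 1 (Φ 1 ω) ≤ ∫ t in (0 : ℝ)..1, (1 / 2 * ‖Φ' t ω‖ ^ 2 + U (Φ t ω)) := by
    simpa only [hΦ₀] using sub_le_integral_lagrangian_of_hjb hU (hs.differentiable one_ne_zero)
      zero_le_one hHJB (hΦderiv ω) (hΦ'cont ω)
  have hΦ₁ : Measurable (Φ 1) := hΦmeas.comp measurable_prodMk_left
  subst hpush
  exact integral_sub_integral_map_le hΦ₁.aemeasurable hs0_int hs1_int hcost_int
    (ae_of_all _ hpath)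

/-- Weak duality (lower bound) of the dual GSB problem, noise-free case: if `s` is `C¹`
and solves the deterministic HJB equation on `[0,1] × ℝ^d`, and `Φ` is a measurable flow
with `C¹` time-slices, `Φ(0,ω) = ω`, and `(Φ(1,·))_# α = β`, then, under the stated
integrability assumptions, the total transport cost satisfies
`∫ [∫₀¹ (½‖∂_t Φ(t,ω)‖² + U(Φ(t,ω))) dt] dα(ω) ≥ ∫ s(0,ω) dα(ω) − ∫ s(1,y) dβ(y)`. -/
theorem gsb_weak_duality
    (d : ℕ) (hd : 1 ≤ d)
    (α β : Measure (EuclideanSpace ℝ (Fin d)))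
    [IsProbabilityMeasure α] [IsProbabilityMeasure β]
    (U : EuclideanSpace ℝ (Fin d) → ℝ) (hU : Continuous U)
    (s : ℝ → EuclideanSpace ℝ (Fin d) → ℝ)
    (hs : ContDiff ℝ 1 (fun q : ℝ × EuclideanSpace ℝ (Fin d) => s q.1 q.2))
    (hHJB : ∀ t ∈ Set.Icc (0 : ℝ) 1, ∀ x : EuclideanSpace ℝ (Fin d),
      deriv (fun τ => s τ x) t = 1 / 2 * ‖gradient (s t) x‖ ^ 2 - U x)
    (Φ Φ' : ℝ → EuclideanSpace ℝ (Fin d) → EuclideanSpace ℝ (Fin d))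
    (hΦmeas : Measurable (fun q : ℝ × EuclideanSpace ℝ (Fin d) => Φ q.1 q.2))
    (hΦderiv : ∀ ω : EuclideanSpace ℝ (Fin d), ∀ t ∈ Set.Icc (0 : ℝ) 1,
      HasDerivAt (fun τ => Φ τ ω) (Φ' t ω) t)
    (hΦ'cont : ∀ ω : EuclideanSpace ℝ (Fin d),
      ContinuousOn (fun t => Φ' t ω) (Set.Icc (0 : ℝ) 1))
    (hΦ₀ : ∀ ω : EuclideanSpace ℝ (Fin d), Φ 0 ω = ω)
    (hpush : Measure.map (fun ω => Φ 1 ω) α = β)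
    (hcost_int : Integrable
      (fun ω => ∫ t in (0 : ℝ)..1, (1 / 2 * ‖Φ' t ω‖ ^ 2 + U (Φ t ω))) α)
    (hs0_int : Integrable (fun ω => s 0 ω) α)
    (hs1_int : Integrable (fun y => s 1 y) β) :
    (∫ ω, (∫ t in (0 : ℝ)..1, (1 / 2 * ‖Φ' t ω‖ ^ 2 + U (Φ t ω))) ∂α) ≥
      (∫ ω, s 0 ω ∂α) - ∫ y, s 1 y ∂β :=
  gsb_weak_duality_general d α β U hU s hs hHJB Φ Φ' hΦmeas hΦderiv hΦ'cont hΦ₀ hpush hcost_int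
    hs0_int hs1_int
end
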